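/- Let 0 < λ_1 < λ_2 < ... < λ_N be real numbers (N ≥ 2) and let p_0 = (p_{1,0}, ..., p_{N,0}) be a probability vector (p_{i,0} ≥ 0, Σ_i p_{i,0} = 1) with p_{1,0} > 0 and p_{N,0} > 0. Define the sequence of probability vectors p_n by the transformation p_{i,n+1} = ((Σ_{j=1}^N λ_j p_{j,n} − λ_i)^2 / Σ_{l=1}^N (Σ_{j=1}^N λ_j p_{j,n} − λ_l)^2 p_{l,n}) · p_{i,n}. Then there exists p_* ∈ (0,1) such that: lim_{n→∞} p_{i,2n} = p_* if i = 1, = 0 if 2 ≤ i ≤ N−1, and = 1 − p_* if i = N; and lim_{n→∞} p_{i,2n+1} = 1 − p_* if i = 1, = 0 if 2 ≤ i ≤ N−1, and = p_* if i = N. -/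

import Mathlib

/-!
Write `x = p_a`, `y = p_b` for the masses at the two extreme points, `m` for the mean, `D` for
the variance and `Δ = λ_b - λ_a`. One step multiplies `x y` by `(S / D) ^ 2`, where
`S = (m - λ_a) (λ_b - m) = D + G` with `G = Σ (λ_l - λ_a) (λ_b - λ_l) p_l ≥ 0` (Bhatia–Davis).
So `x y` increases to a limit `v > 0`, which forces `G → 0` and hence kills every interior mass.
Then `m - λ_a ≈ Δ y` and `D ≈ Δ² x y`, so the next value of `x` is `≈ y ≈ 1 - x`: the mass
oscillates between the two ends, `x (1 - x) → v`, and since `x_{2n+2} - x_{2n} → 0` the even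
terms settle on one of the two roots of `t (1 - t) = v`.
-/

open Filter Topology Set Function

theorem exists_tendsto_of_tendsto_abs_of_tendsto_sub {w : ℕ → ℝ} {c : ℝ}
    (habs : Tendsto (fun n => |w n|) atTop (𝓝 c))
    (hstep : Tendsto (fun n => w (n + 1) - w n) atTop (𝓝 0)) :
    ∃ s, |s| = c ∧ Tendsto w atTop (𝓝 s) := by
  rcases (ge_of_tendsto' habs fun n => abs_nonneg _).eq_or_lt with rfl | hc
  · exact ⟨0, abs_zero, (tendsto_zero_iff_abs_tendsto_zero w).2 habs⟩
  obtain ⟨M, hM⟩ := eventually_atTop.1 ((habs.eventually (lt_mem_nhds (half_lt_self hc))).and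
    (hstep.eventually (Ioo_mem_nhds (neg_neg_of_pos hc) hc)))
  -- once `|w n| > c / 2` and the increments are smaller than `c`, the sign of `w` cannot change
  have hsign : ∀ n ≥ M, (0 < w n ↔ 0 < w M) := by
    refine Nat.le_induction Iff.rfl fun n hn ih => ?_
    rw [← ih]
    obtain ⟨habs_n, hinc_lo, hinc_hi⟩ := hM n hn
    have habs_succ := (hM (n + 1) (by omega)).1
    rcases lt_abs.1 habs_n with h | h <;> rcases lt_abs.1 habs_succ with h' | h' <;>
      constructor <;> intro <;> linarith
  by_cases hpos : 0 < w M
  · refine ⟨c, abs_of_pos hc, habs.congr' (eventually_atTop.2 ⟨M, fun n hn => ?_⟩)⟩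
    exact abs_of_pos ((hsign n hn).2 hpos)
  · refine ⟨-c, by rw [abs_neg, abs_of_pos hc],
      habs.neg.congr' (eventually_atTop.2 ⟨M, fun n hn => ?_⟩)⟩
    rw [abs_of_nonpos (not_lt.1 fun h => hpos ((hsign n hn).1 h)), neg_neg]

noncomputable section

namespace Akaike

variable {ι : Type*} [Fintype ι]

def mean (lam p : ι → ℝ) : ℝ := ∑ j, lam j * p j

def variance (lam p : ι → ℝ) : ℝ := ∑ l, (mean lam p - lam l) ^ 2 * p l

def step (lam p : ι → ℝ) (i : ι) : ℝ := (mean lam p - lam i) ^ 2 / variance lam p * p i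

def bhatiaDavisGap (lam : ι → ℝ) (a b : ι) (p : ι → ℝ) : ℝ :=
  ∑ l, (lam l - lam a) * (lam b - lam l) * p l

variable {lam p : ι → ℝ} {a b : ι}

theorem sum_sub_mul_eq (hp : ∑ i, p i = 1) (c : ℝ) :
    ∑ l, (lam l - c) * p l = mean lam p - c := by
  simp only [sub_mul, Finset.sum_sub_distrib, ← Finset.mul_sum, hp, mean, mul_one]

theorem sum_const_sub_mul_eq (hp : ∑ i, p i = 1) (c : ℝ) :
    ∑ l, (c - lam l) * p l = c - mean lam p := by
  simp only [sub_mul, Finset.sum_sub_distrib, ← Finset.mul_sum, hp, mean, mul_one]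

theorem sub_mul_le_mean_sub (hp : p ∈ stdSimplex ℝ ι) (hlo : ∀ l, lam a ≤ lam l) (b : ι) :
    (lam b - lam a) * p b ≤ mean lam p - lam a := by
  rw [← sum_sub_mul_eq hp.2]
  exact Finset.single_le_sum (f := fun l => (lam l - lam a) * p l)
    (fun l _ => mul_nonneg (sub_nonneg.2 (hlo l)) (hp.1 l)) (Finset.mem_univ b)

theorem sub_mul_le_sub_mean (hp : p ∈ stdSimplex ℝ ι) (hhi : ∀ l, lam l ≤ lam b) (a : ι) :
    (lam b - lam a) * p a ≤ lam b - mean lam p := by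
  rw [← sum_const_sub_mul_eq hp.2]
  exact Finset.single_le_sum (f := fun l => (lam b - lam l) * p l)
    (fun l _ => mul_nonneg (sub_nonneg.2 (hhi l)) (hp.1 l)) (Finset.mem_univ a)

theorem mean_sub_mul_sub_mean (hp : ∑ i, p i = 1) :
    (mean lam p - lam a) * (lam b - mean lam p) = variance lam p + bhatiaDavisGap lam a b p := by
  have key : ∀ l, (mean lam p - lam l) ^ 2 * p l + (lam l - lam a) * (lam b - lam l) * p l =
      (mean lam p - lam a) * (lam b - mean lam p) * p l
        + (lam a + lam b - 2 * mean lam p) * ((lam l - mean lam p) * p l) := fun l => by ring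
  rw [variance, bhatiaDavisGap, ← Finset.sum_add_distrib, Finset.sum_congr rfl fun l _ => key l,
    Finset.sum_add_distrib, ← Finset.mul_sum, ← Finset.mul_sum, sum_sub_mul_eq hp, hp]
  ring

theorem bhatiaDavisGap_nonneg (hp : p ∈ stdSimplex ℝ ι) (hlo : ∀ l, lam a ≤ lam l)
    (hhi : ∀ l, lam l ≤ lam b) : 0 ≤ bhatiaDavisGap lam a b p :=
  Finset.sum_nonneg fun l _ =>
    mul_nonneg (mul_nonneg (sub_nonneg.2 (hlo l)) (sub_nonneg.2 (hhi l))) (hp.1 l)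

theorem mul_le_bhatiaDavisGap (hp : p ∈ stdSimplex ℝ ι) (hlo : ∀ l, lam a ≤ lam l)
    (hhi : ∀ l, lam l ≤ lam b) (i : ι) :
    (lam i - lam a) * (lam b - lam i) * p i ≤ bhatiaDavisGap lam a b p :=
  Finset.single_le_sum (f := fun l => (lam l - lam a) * (lam b - lam l) * p l)
    (fun l _ => mul_nonneg (mul_nonneg (sub_nonneg.2 (hlo l)) (sub_nonneg.2 (hhi l))) (hp.1 l))
    (Finset.mem_univ i)

theorem mean_mem_Icc (hp : p ∈ stdSimplex ℝ ι) (hlo : ∀ l, lam a ≤ lam l)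
    (hhi : ∀ l, lam l ≤ lam b) : mean lam p ∈ Icc (lam a) (lam b) := by
  constructor
  · linarith [mul_nonneg (sub_nonneg.2 (hlo b)) (hp.1 b), sub_mul_le_mean_sub hp hlo b]
  · linarith [mul_nonneg (sub_nonneg.2 (hhi a)) (hp.1 a), sub_mul_le_sub_mean hp hhi a]

theorem variance_le (hp : p ∈ stdSimplex ℝ ι) (hlo : ∀ l, lam a ≤ lam l)
    (hhi : ∀ l, lam l ≤ lam b) : variance lam p ≤ (lam b - lam a) ^ 2 := by
  have hm := mean_mem_Icc hp hlo hhi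
  have hBD := mean_sub_mul_sub_mean (lam := lam) (a := a) (b := b) hp.2
  nlinarith [bhatiaDavisGap_nonneg hp hlo hhi, hm.1, hm.2]

theorem le_variance (hp : p ∈ stdSimplex ℝ ι) (hlo : ∀ l, lam a ≤ lam l)
    (hhi : ∀ l, lam l ≤ lam b) (hab : a ≠ b) :
    (lam b - lam a) ^ 2 * (p a * p b) ^ 2 ≤ variance lam p := by
  classical
  have hpair :
      (mean lam p - lam a) ^ 2 * p a + (mean lam p - lam b) ^ 2 * p b ≤ variance lam p := by
    calc _ = ∑ l ∈ {a, b}, (mean lam p - lam l) ^ 2 * p l := (Finset.sum_pair hab).symm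
      _ ≤ _ := Finset.sum_le_sum_of_subset_of_nonneg (Finset.subset_univ _)
          fun l _ _ => mul_nonneg (sq_nonneg _) (hp.1 l)
  have ha1 : p a ≤ 1 := stdSimplex.le_one ⟨p, hp⟩ a
  have hb1 : p b ≤ 1 := stdSimplex.le_one ⟨p, hp⟩ b
  have hΔ : 0 ≤ lam b - lam a := sub_nonneg.2 (hlo b)
  have hA : ((lam b - lam a) * p b) ^ 2 ≤ (mean lam p - lam a) ^ 2 :=
    pow_le_pow_left₀ (mul_nonneg hΔ (hp.1 b)) (sub_mul_le_mean_sub hp hlo b) 2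
  have hB : ((lam b - lam a) * p a) ^ 2 ≤ (mean lam p - lam b) ^ 2 := by
    rw [← neg_sq (mean lam p - lam b), neg_sub]
    exact pow_le_pow_left₀ (mul_nonneg hΔ (hp.1 a)) (sub_mul_le_sub_mean hp hhi a) 2
  have hab1 : p a * p b ≤ p a + p b := by nlinarith [hp.1 a, hp.1 b]
  calc (lam b - lam a) ^ 2 * (p a * p b) ^ 2
      ≤ (lam b - lam a) ^ 2 * (p a * p b) * (p a + p b) := by
        rw [sq (p a * p b), ← mul_assoc]
        exact mul_le_mul_of_nonneg_left hab1
          (mul_nonneg (sq_nonneg _) (mul_nonneg (hp.1 a) (hp.1 b)))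
    _ = ((lam b - lam a) * p b) ^ 2 * p a + ((lam b - lam a) * p a) ^ 2 * p b := by ring
    _ ≤ (mean lam p - lam a) ^ 2 * p a + (mean lam p - lam b) ^ 2 * p b := by
        gcongr <;> exact hp.1 _
    _ ≤ variance lam p := hpair

theorem variance_pos (hp : p ∈ stdSimplex ℝ ι) (hlo : ∀ l, lam a ≤ lam l)
    (hhi : ∀ l, lam l ≤ lam b) (hab : lam a < lam b) (ha : 0 < p a) (hb : 0 < p b) :
    0 < variance lam p := by
  have := sub_pos.2 hab
  exact lt_of_lt_of_le (by positivity) (le_variance hp hlo hhi (ne_of_apply_ne lam hab.ne))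

theorem step_mem_stdSimplex (hp : p ∈ stdSimplex ℝ ι) (hD : 0 < variance lam p) :
    step lam p ∈ stdSimplex ℝ ι := by
  refine ⟨fun i => mul_nonneg (div_nonneg (sq_nonneg _) hD.le) (hp.1 i), ?_⟩
  simp only [step, div_mul_eq_mul_div, ← Finset.sum_div]
  exact div_self hD.ne'

theorem step_pos (hD : 0 < variance lam p) {i : ι} (hi : mean lam p ≠ lam i) (hpi : 0 < p i) :
    0 < step lam p i :=
  mul_pos (div_pos (sq_pos_of_ne_zero (sub_ne_zero.2 hi)) hD) hpi

theorem bhatiaDavisGap_mul_le (hp : p ∈ stdSimplex ℝ ι) (hlo : ∀ l, lam a ≤ lam l)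
    (hhi : ∀ l, lam l ≤ lam b) (hD : 0 < variance lam p) :
    bhatiaDavisGap lam a b p * (p a * p b) ≤
      variance lam p * (step lam p a * step lam p b - p a * p b) := by
  set D := variance lam p
  set G := bhatiaDavisGap lam a b p
  have hG : 0 ≤ G := bhatiaDavisGap_nonneg hp hlo hhi
  have hV : 0 ≤ p a * p b := mul_nonneg (hp.1 a) (hp.1 b)
  have hstep : step lam p a * step lam p b = (D + G) ^ 2 / D ^ 2 * (p a * p b) := by
    rw [← mean_sub_mul_sub_mean hp.2]
    simp only [step]
    ring
  have key : D * (step lam p a * step lam p b - p a * p b) = (2 * G + G ^ 2 / D) * (p a * p b) := by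
    rw [hstep]
    field_simp
    ring
  rw [key]
  nlinarith [div_nonneg (sq_nonneg G) hD.le]

theorem abs_step_sub_mul_variance_le [DecidableEq ι] (hp : p ∈ stdSimplex ℝ ι)
    (hlo : ∀ l, lam a ≤ lam l) (hhi : ∀ l, lam l ≤ lam b) (hab : a ≠ b)
    (hD : 0 < variance lam p) :
    |step lam p a - p b| * variance lam p ≤
      (lam b - lam a) ^ 2 * ∑ l ∈ {a, b}ᶜ, p l + bhatiaDavisGap lam a b p := by
  set m := mean lam p
  set R := ∑ l ∈ {a, b}ᶜ, (lam l - m) * p l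
  have hR : (m - lam a) * p a - (lam b - m) * p b = R := by
    have h := Finset.sum_compl_add_sum {a, b} fun l => (lam l - m) * p l
    rw [Finset.sum_pair hab, sum_sub_mul_eq hp.2, sub_self] at h
    linarith
  have hm := mean_mem_Icc hp hlo hhi
  have hRle : |R| ≤ (lam b - lam a) * ∑ l ∈ {a, b}ᶜ, p l := by
    rw [Finset.mul_sum]
    refine (Finset.abs_sum_le_sum_abs _ _).trans (Finset.sum_le_sum fun l _ => ?_)
    rw [abs_mul, abs_of_nonneg (hp.1 l)]
    refine mul_le_mul_of_nonneg_right (abs_le.2 ⟨?_, ?_⟩) (hp.1 l)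
    · linarith [hm.2, hlo l]
    · linarith [hm.1, hhi l]
  have hid : (step lam p a - p b) * variance lam p =
      (m - lam a) * R + p b * bhatiaDavisGap lam a b p := by
    have hBD := mean_sub_mul_sub_mean (lam := lam) (a := a) (b := b) hp.2
    simp only [step]
    field_simp
    rw [← hR]
    linear_combination (p b) * hBD
  have hb1 : p b ≤ 1 := stdSimplex.le_one ⟨p, hp⟩ b
  have hG := bhatiaDavisGap_nonneg hp hlo hhi
  rw [← abs_of_pos hD, ← abs_mul, hid]
  calc |(m - lam a) * R + p b * bhatiaDavisGap lam a b p|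
      ≤ (m - lam a) * |R| + p b * bhatiaDavisGap lam a b p := by
        refine (abs_add_le _ _).trans ?_
        rw [abs_mul, abs_mul, abs_of_nonneg (sub_nonneg.2 hm.1), abs_of_nonneg (hp.1 b),
          abs_of_nonneg hG]
    _ ≤ (lam b - lam a) * ((lam b - lam a) * ∑ l ∈ {a, b}ᶜ, p l)
          + 1 * bhatiaDavisGap lam a b p := by
        gcongr <;> linarith [hm.1, hm.2]
    _ = _ := by ring

structure IsOrbit (lam : ι → ℝ) (a b : ι) (p : ℕ → ι → ℝ) : Prop where
  injective : Injective lam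
  left_lt_right : lam a < lam b
  left_le : ∀ l, lam a ≤ lam l
  le_right : ∀ l, lam l ≤ lam b
  mem_zero : p 0 ∈ stdSimplex ℝ ι
  pos_left_zero : 0 < p 0 a
  pos_right_zero : 0 < p 0 b
  succ_eq_step : ∀ n, p (n + 1) = step lam (p n)

namespace IsOrbit

variable {p : ℕ → ι → ℝ}

theorem mem_and_pos (h : IsOrbit lam a b p) (n : ℕ) :
    p n ∈ stdSimplex ℝ ι ∧ 0 < p n a ∧ 0 < p n b := by
  induction n with
  | zero => exact ⟨h.mem_zero, h.pos_left_zero, h.pos_right_zero⟩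
  | succ n ih =>
    obtain ⟨hp, ha, hb⟩ := ih
    have hD := variance_pos hp h.left_le h.le_right h.left_lt_right ha hb
    have hΔ := sub_pos.2 h.left_lt_right
    have hma : mean lam (p n) ≠ lam a :=
      (sub_pos.1 ((mul_pos hΔ hb).trans_le (sub_mul_le_mean_sub hp h.left_le b))).ne'
    have hmb : mean lam (p n) ≠ lam b :=
      (sub_pos.1 ((mul_pos hΔ ha).trans_le (sub_mul_le_sub_mean hp h.le_right a))).ne
    rw [h.succ_eq_step n]
    exact ⟨step_mem_stdSimplex hp hD, step_pos hD hma ha, step_pos hD hmb hb⟩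

theorem mem (h : IsOrbit lam a b p) (n : ℕ) : p n ∈ stdSimplex ℝ ι := (h.mem_and_pos n).1

theorem pos_left (h : IsOrbit lam a b p) (n : ℕ) : 0 < p n a := (h.mem_and_pos n).2.1

theorem pos_right (h : IsOrbit lam a b p) (n : ℕ) : 0 < p n b := (h.mem_and_pos n).2.2

theorem variance_pos (h : IsOrbit lam a b p) (n : ℕ) : 0 < variance lam (p n) :=
  Akaike.variance_pos (h.mem n) h.left_le h.le_right h.left_lt_right (h.pos_left n) (h.pos_right n)

theorem bhatiaDavisGap_mul_le (h : IsOrbit lam a b p) (n : ℕ) :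
    bhatiaDavisGap lam a b (p n) * (p n a * p n b) ≤
      variance lam (p n) * (p (n + 1) a * p (n + 1) b - p n a * p n b) := by
  rw [h.succ_eq_step n]
  exact Akaike.bhatiaDavisGap_mul_le (h.mem n) h.left_le h.le_right (h.variance_pos n)

theorem monotone_mul (h : IsOrbit lam a b p) : Monotone fun n => p n a * p n b := by
  refine monotone_nat_of_le_succ fun n => ?_
  have hG := bhatiaDavisGap_nonneg (h.mem n) h.left_le h.le_right
  have := (mul_nonneg hG (mul_pos (h.pos_left n) (h.pos_right n)).le).trans
    (h.bhatiaDavisGap_mul_le n)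
  exact sub_nonneg.1 (nonneg_of_mul_nonneg_right this (h.variance_pos n))

theorem exists_tendsto_mul (h : IsOrbit lam a b p) :
    ∃ v, 0 < v ∧ Tendsto (fun n => p n a * p n b) atTop (𝓝 v) := by
  have hbdd : BddAbove (range fun n => p n a * p n b) := ⟨1, by
    rintro _ ⟨n, rfl⟩
    exact mul_le_one₀ (stdSimplex.le_one ⟨_, h.mem n⟩ a) (h.pos_right n).le
      (stdSimplex.le_one ⟨_, h.mem n⟩ b)⟩
  exact ⟨_, (mul_pos (h.pos_left 0) (h.pos_right 0)).trans_le (le_ciSup hbdd 0),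
    tendsto_atTop_ciSup h.monotone_mul hbdd⟩

theorem tendsto_bhatiaDavisGap (h : IsOrbit lam a b p) :
    Tendsto (fun n => bhatiaDavisGap lam a b (p n)) atTop (𝓝 0) := by
  obtain ⟨v, -, hv⟩ := h.exists_tendsto_mul
  set V := fun n => p n a * p n b
  have hV0 : 0 < V 0 := mul_pos (h.pos_left 0) (h.pos_right 0)
  have hinc : Tendsto (fun n => (lam b - lam a) ^ 2 / V 0 * (V (n + 1) - V n)) atTop (𝓝 0) := by
    simpa using ((hv.comp (tendsto_add_atTop_nat 1)).sub hv).const_mul ((lam b - lam a) ^ 2 / V 0)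
  refine squeeze_zero (fun n => bhatiaDavisGap_nonneg (h.mem n) h.left_le h.le_right)
    (fun n => ?_) hinc
  have hG := bhatiaDavisGap_nonneg (h.mem n) h.left_le h.le_right
  have hmono := h.monotone_mul n.le_succ
  rw [div_mul_eq_mul_div, le_div_iff₀ hV0]
  calc bhatiaDavisGap lam a b (p n) * V 0 ≤ bhatiaDavisGap lam a b (p n) * V n :=
        mul_le_mul_of_nonneg_left (h.monotone_mul (Nat.zero_le n)) hG
    _ ≤ variance lam (p n) * (V (n + 1) - V n) := h.bhatiaDavisGap_mul_le n
    _ ≤ (lam b - lam a) ^ 2 * (V (n + 1) - V n) :=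
        mul_le_mul_of_nonneg_right (variance_le (h.mem n) h.left_le h.le_right)
          (sub_nonneg.2 hmono)

theorem tendsto_apply_of_ne (h : IsOrbit lam a b p) {i : ι} (hia : i ≠ a) (hib : i ≠ b) :
    Tendsto (fun n => p n i) atTop (𝓝 0) := by
  have hc : 0 < (lam i - lam a) * (lam b - lam i) :=
    mul_pos (sub_pos.2 ((h.left_le i).lt_of_ne (h.injective.ne hia.symm)))
      (sub_pos.2 ((h.le_right i).lt_of_ne (h.injective.ne hib)))
  refine squeeze_zero (fun n => (h.mem n).1 i) (fun n => ?_)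
    (by simpa using h.tendsto_bhatiaDavisGap.div_const ((lam i - lam a) * (lam b - lam i)))
  rw [le_div_iff₀ hc, mul_comm]
  exact mul_le_bhatiaDavisGap (h.mem n) h.left_le h.le_right i

theorem tendsto_sum_compl [DecidableEq ι] (h : IsOrbit lam a b p) :
    Tendsto (fun n => ∑ l ∈ {a, b}ᶜ, p n l) atTop (𝓝 0) := by
  have := tendsto_finsetSum ({a, b}ᶜ : Finset ι) (f := fun l n => p n l) (a := fun _ => 0)
    fun l hl => by
      simp only [Finset.mem_compl, Finset.mem_insert, Finset.mem_singleton, not_or] at hl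
      exact h.tendsto_apply_of_ne hl.1 hl.2
  simpa only [Finset.sum_const_zero] using this

theorem tendsto_succ_left_sub_right (h : IsOrbit lam a b p) :
    Tendsto (fun n => p (n + 1) a - p n b) atTop (𝓝 0) := by
  classical
  set V0 := p 0 a * p 0 b
  have hV0 : 0 < V0 := mul_pos (h.pos_left 0) (h.pos_right 0)
  have hc : 0 < (lam b - lam a) ^ 2 * V0 ^ 2 := by have := sub_pos.2 h.left_lt_right; positivity
  have hbound := ((h.tendsto_sum_compl.const_mul ((lam b - lam a) ^ 2)).add
    h.tendsto_bhatiaDavisGap).div_const ((lam b - lam a) ^ 2 * V0 ^ 2)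
  simp only [mul_zero, add_zero, zero_div] at hbound
  refine (tendsto_zero_iff_abs_tendsto_zero _).2 (squeeze_zero (fun n => abs_nonneg _)
    (fun n => ?_) hbound)
  have hD := h.variance_pos n
  have hab : a ≠ b := ne_of_apply_ne lam h.left_lt_right.ne
  have hDlow : (lam b - lam a) ^ 2 * V0 ^ 2 ≤ variance lam (p n) := by
    refine le_trans ?_ (le_variance (h.mem n) h.left_le h.le_right hab)
    gcongr
    exact h.monotone_mul (Nat.zero_le n)
  rw [le_div_iff₀ hc]
  calc |p (n + 1) a - p n b| * ((lam b - lam a) ^ 2 * V0 ^ 2)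
      ≤ |p (n + 1) a - p n b| * variance lam (p n) :=
        mul_le_mul_of_nonneg_left hDlow (abs_nonneg _)
    _ ≤ _ := by
        rw [h.succ_eq_step n]
        exact abs_step_sub_mul_variance_le (h.mem n) h.left_le h.le_right hab hD

theorem add_add_sum_compl [DecidableEq ι] (h : IsOrbit lam a b p) (n : ℕ) :
    p n a + p n b + ∑ l ∈ {a, b}ᶜ, p n l = 1 := by
  have := Finset.sum_compl_add_sum {a, b} (p n)
  rw [Finset.sum_pair (ne_of_apply_ne lam h.left_lt_right.ne), (h.mem n).2] at this
  linarith

theorem tendsto_succ_left_sub_one_sub_left (h : IsOrbit lam a b p) :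
    Tendsto (fun n => p (n + 1) a - (1 - p n a)) atTop (𝓝 0) := by
  classical
  refine (sub_zero (0 : ℝ) ▸ h.tendsto_succ_left_sub_right.sub h.tendsto_sum_compl).congr
    fun n => ?_
  linarith [h.add_add_sum_compl n]

theorem tendsto_mul_one_sub (h : IsOrbit lam a b p) {v : ℝ}
    (hv : Tendsto (fun n => p n a * p n b) atTop (𝓝 v)) :
    Tendsto (fun n => p n a * (1 - p n a)) atTop (𝓝 v) := by
  classical
  have hε := h.tendsto_sum_compl
  have hxε : Tendsto (fun n => p n a * ∑ l ∈ {a, b}ᶜ, p n l) atTop (𝓝 0) := by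
    refine squeeze_zero (fun n => mul_nonneg ((h.mem n).1 a) (Finset.sum_nonneg fun l _ =>
      (h.mem n).1 l)) (fun n => ?_) hε
    exact mul_le_of_le_one_left (Finset.sum_nonneg fun l _ => (h.mem n).1 l)
      (stdSimplex.le_one ⟨_, h.mem n⟩ a)
  refine (add_zero v ▸ hv.add hxε).congr fun n => ?_
  linear_combination (p n a) * h.add_add_sum_compl n

theorem tendsto_right_of_tendsto_left (h : IsOrbit lam a b p) {φ : ℕ → ℕ}
    (hφ : Tendsto φ atTop atTop) {q : ℝ} (hq : Tendsto (fun n => p (φ n) a) atTop (𝓝 q)) :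
    Tendsto (fun n => p (φ n) b) atTop (𝓝 (1 - q)) := by
  classical
  refine (sub_zero (1 - q) ▸ (hq.const_sub 1).sub (h.tendsto_sum_compl.comp hφ)).congr
    fun n => ?_
  simp only [Function.comp_apply]
  linarith [h.add_add_sum_compl (φ n)]

theorem exists_tendsto_two_mul (h : IsOrbit lam a b p) :
    ∃ q ∈ Ioo (0 : ℝ) 1, Tendsto (fun n => p (2 * n) a) atTop (𝓝 q) := by
  obtain ⟨v, hv0, hv⟩ := h.exists_tendsto_mul
  have h2 : Tendsto (fun n : ℕ => 2 * n) atTop atTop := tendsto_id.const_mul_atTop' two_pos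
  have habs : Tendsto (fun n => |p (2 * n) a - 1 / 2|) atTop (𝓝 √(1 / 4 - v)) := by
    refine (((h.tendsto_mul_one_sub hv).comp h2).const_sub (1 / 4)).sqrt.congr fun n => ?_
    rw [← Real.sqrt_sq_eq_abs]
    congr 1
    simp only [Function.comp_apply]
    ring
  have hinc : Tendsto (fun n => (p (2 * (n + 1)) a - 1 / 2) - (p (2 * n) a - 1 / 2))
      atTop (𝓝 0) := by
    have hflip := h.tendsto_succ_left_sub_one_sub_left
    refine (sub_zero (0 : ℝ) ▸ (hflip.comp (tendsto_add_atTop_nat 1 |>.comp h2)).sub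
      (hflip.comp h2)).congr fun n => ?_
    simp only [Function.comp_apply, show 2 * (n + 1) = 2 * n + 1 + 1 by ring]
    ring
  obtain ⟨s, hs, hw⟩ := exists_tendsto_of_tendsto_abs_of_tendsto_sub habs hinc
  have hs' : |s| < 1 / 2 := hs ▸ (Real.sqrt_lt' (by norm_num)).2 (by linarith)
  refine ⟨1 / 2 + s, ⟨by linarith [neg_abs_le s], by linarith [le_abs_self s]⟩, ?_⟩
  exact (add_comm s (1 / 2) ▸ hw.add_const (1 / 2)).congr fun n => by ring

theorem exists_tendsto (h : IsOrbit lam a b p) :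
    ∃ q ∈ Ioo (0 : ℝ) 1,
      Tendsto (fun n => p (2 * n) a) atTop (𝓝 q) ∧
      Tendsto (fun n => p (2 * n) b) atTop (𝓝 (1 - q)) ∧
      Tendsto (fun n => p (2 * n + 1) a) atTop (𝓝 (1 - q)) ∧
      Tendsto (fun n => p (2 * n + 1) b) atTop (𝓝 q) := by
  obtain ⟨q, hq, heven⟩ := h.exists_tendsto_two_mul
  have h2 : Tendsto (fun n : ℕ => 2 * n) atTop atTop := tendsto_id.const_mul_atTop' two_pos
  have hodd : Tendsto (fun n => p (2 * n + 1) a) atTop (𝓝 (1 - q)) :=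
    (zero_add (1 - q) ▸ (h.tendsto_succ_left_sub_one_sub_left.comp h2).add
      (heven.const_sub 1)).congr fun n => by simp only [Function.comp_apply]; ring
  refine ⟨q, hq, heven, h.tendsto_right_of_tendsto_left h2 heven, hodd, ?_⟩
  simpa using h.tendsto_right_of_tendsto_left (tendsto_add_atTop_nat 1 |>.comp h2) hodd

end IsOrbit

end Akaike

end

/-- Akaike-type transformation lemma: the probability measure transformation
`p_{i,n+1} = ((Σ_j λ_j p_{j,n} − λ_i)² / Σ_l (Σ_j λ_j p_{j,n} − λ_l)² p_{l,n}) p_{i,n}`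
concentrates, alternately in `n`, on the two extreme points `λ_1` and `λ_N`. -/
theorem akaike_transformation
    (N : ℕ) (hN : 2 ≤ N)
    (lam : Fin N → ℝ)
    (hmono : StrictMono lam)
    (p : ℕ → Fin N → ℝ)
    (hp_nonneg : ∀ i, 0 ≤ p 0 i)
    (hp_sum : ∑ i, p 0 i = 1)
    (hp1 : 0 < p 0 ⟨0, by omega⟩)
    (hpN : 0 < p 0 ⟨N - 1, by omega⟩)
    (hrec : ∀ n i, p (n + 1) i =
      ((∑ j, lam j * p n j) - lam i) ^ 2 /
        (∑ l, ((∑ j, lam j * p n j) - lam l) ^ 2 * p n l) * p n i) :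
    ∃ pstar : ℝ, pstar ∈ Set.Ioo (0 : ℝ) 1 ∧
      Tendsto (fun n => p (2 * n) ⟨0, by omega⟩) atTop (𝓝 pstar) ∧
      (∀ i : Fin N, 0 < i.1 → i.1 < N - 1 →
        Tendsto (fun n => p (2 * n) i) atTop (𝓝 0)) ∧
      Tendsto (fun n => p (2 * n) ⟨N - 1, by omega⟩) atTop (𝓝 (1 - pstar)) ∧
      Tendsto (fun n => p (2 * n + 1) ⟨0, by omega⟩) atTop (𝓝 (1 - pstar)) ∧
      (∀ i : Fin N, 0 < i.1 → i.1 < N - 1 →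
        Tendsto (fun n => p (2 * n + 1) i) atTop (𝓝 0)) ∧
      Tendsto (fun n => p (2 * n + 1) ⟨N - 1, by omega⟩) atTop (𝓝 pstar) := by
  have h : Akaike.IsOrbit lam ⟨0, by omega⟩ ⟨N - 1, by omega⟩ p :=
    { injective := hmono.injective
      left_lt_right := hmono (Fin.mk_lt_mk.2 (by omega))
      left_le := fun l => hmono.monotone (Fin.mk_le_mk.2 (Nat.zero_le l))
      le_right := fun l => hmono.monotone (Fin.le_iff_val_le_val.2 (Nat.le_sub_one_of_lt l.2))
      mem_zero := ⟨hp_nonneg, hp_sum⟩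
      pos_left_zero := hp1
      pos_right_zero := hpN
      succ_eq_step := fun n => funext (hrec n) }
  obtain ⟨pstar, hpstar, heven_left, heven_right, hodd_left, hodd_right⟩ := h.exists_tendsto
  have hinterior : ∀ φ : ℕ → ℕ, StrictMono φ → ∀ i : Fin N, 0 < i.1 → i.1 < N - 1 →
      Tendsto (fun n => p (φ n) i) atTop (𝓝 0) := fun φ hφ i hi0 hiN =>
    (h.tendsto_apply_of_ne (Fin.ne_of_val_ne hi0.ne') (Fin.ne_of_val_ne hiN.ne)).comp
      hφ.tendsto_atTop
  exact ⟨pstar, hpstar, heven_left, hinterior _ (fun m n hmn => by omega), heven_right, hodd_left,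
    hinterior _ (fun m n hmn => by omega), hodd_right⟩
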